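/- arXiv:2512.17297 — 2 statements merged into one kernel-verified Lean document; each statement's English description precedes it below -/
import Mathlib

section
/- For all positive integers m, n and all x, y in the standard simplex S^d, the kernel of the composition of multivariate Bernstein–Durrmeyer operators is symmetric in the two degrees and in the two arguments: K_{m,n}(x,y) = K_{n,m}(x,y) and K_{m,n}(x,y) = K_{m,n}(y,x). Consequently, the multivariate Bernstein–Durrmeyer operators commute: M_m ∘ M_n = M_n ∘ M_m on L^1(S^d). -/
open MeasureTheory

/-- The standard simplex `S^d ⊆ ℝ^d`. -/
def stdSimplexSet (d : ℕ) : Set (Fin d → ℝ) :=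
  {x | (∀ i, 0 ≤ x i ∧ x i ≤ 1) ∧ ∑ i, x i ≤ 1}

/-- Barycentric coordinates `(x₀, x₁, …, x_d)` with `x₀ = 1 - x₁ - ⋯ - x_d`. -/
noncomputable def bary (d : ℕ) (x : Fin d → ℝ) : Fin (d + 1) → ℝ :=
  Fin.cons (1 - ∑ i, x i) x

/-- The `d`-variate Bernstein basis polynomial `B_α`. -/
noncomputable def bernsteinPoly (d : ℕ) (α : Fin (d + 1) → ℕ) (x : Fin d → ℝ) : ℝ :=
  (((∑ i, α i).factorial : ℝ) / ∏ i, ((α i).factorial : ℝ)) * ∏ i, bary d x i ^ α i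

/-- `⟨1, B_α⟩ = ∫_{S^d} B_α(t) dt`. -/
noncomputable def bernsteinIntegral (d : ℕ) (α : Fin (d + 1) → ℕ) : ℝ :=
  ∫ t in stdSimplexSet d, bernsteinPoly d α t

/-- The multivariate Bernstein–Durrmeyer operator `M_n`. -/
noncomputable def durrmeyerOp (d n : ℕ) (f : (Fin d → ℝ) → ℝ) (x : Fin d → ℝ) : ℝ :=
  ∑ α ∈ Finset.Nat.antidiagonalTuple (d + 1) n,
    ((∫ t in stdSimplexSet d, f t * bernsteinPoly d α t) / bernsteinIntegral d α) *
      bernsteinPoly d α x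

/-- Kernel `K_{m,n}` of the composition `M_m ∘ M_n`. -/
noncomputable def durrmeyerKernelComp (d m n : ℕ) (x y : Fin d → ℝ) : ℝ :=
  ∑ β ∈ Finset.Nat.antidiagonalTuple (d + 1) m,
    ∑ α ∈ Finset.Nat.antidiagonalTuple (d + 1) n,
      bernsteinPoly d α y * bernsteinPoly d β x *
        ((∫ t in stdSimplexSet d, bernsteinPoly d α t * bernsteinPoly d β t) /
          (bernsteinIntegral d α * bernsteinIntegral d β))

namespace DKaux

open Finset

/-! ### Elementary factorial/binomial lemmas -/

lemma fact_cast_ne (k : ℕ) : ((k.factorial : ℝ)) ≠ 0 := by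
  exact_mod_cast k.factorial_ne_zero

lemma vandermonde' (a b M : ℕ) (ha : a < M) :
    ∑ k ∈ range M, a.choose k * b.choose k = (a + b).choose a := by
  have h0 : ∑ k ∈ range (a+1), a.choose k * b.choose k = (a+b).choose a := by
    rw [Nat.add_choose_eq, Finset.Nat.sum_antidiagonal_eq_sum_range_succ_mk,
      ← Finset.sum_range_reflect]
    refine Finset.sum_congr rfl fun j hj => ?_
    rw [mem_range, Nat.lt_succ_iff] at hj
    have h1 : a + 1 - 1 - j = a - j := by omega
    rw [h1, Nat.choose_symm hj]
  rw [← h0]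
  refine (Finset.sum_subset (Finset.range_subset_range.2 ha) fun k _ hk => ?_).symm
  rw [mem_range, Nat.lt_succ_iff, not_le] at hk
  rw [Nat.choose_eq_zero_of_lt hk, zero_mul]

lemma choose_fact_inv {a k : ℕ} (h : k ≤ a) :
    ((a.choose k : ℝ)) * ((a.factorial : ℝ))⁻¹
      = ((k.factorial : ℝ))⁻¹ * (((a - k).factorial : ℝ))⁻¹ := by
  have h2 : ((a.choose k : ℝ)) * (k.factorial : ℝ) * ((a-k).factorial : ℝ) = (a.factorial : ℝ) := by
    exact_mod_cast congrArg (Nat.cast : ℕ → ℝ) (Nat.choose_mul_factorial_mul_factorial h)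
  field_simp
  linarith [h2]

lemma add_choose_fact (a b : ℕ) :
    ((a + b).factorial : ℝ) * ((a.factorial : ℝ))⁻¹ * ((b.factorial : ℝ))⁻¹
      = (((a + b).choose a : ℕ) : ℝ) := by
  have h2 : (((a+b).choose a : ℕ) : ℝ) * (a.factorial : ℝ) * (((a+b) - a).factorial : ℝ)
      = ((a+b).factorial : ℝ) := by
    exact_mod_cast congrArg (Nat.cast : ℕ → ℝ)
      (Nat.choose_mul_factorial_mul_factorial (Nat.le_add_right a b))
  rw [Nat.add_sub_cancel_left] at h2
  field_simp
  linarith [h2]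

lemma mem_A {d n : ℕ} {α : Fin (d+1) → ℕ} (h : α ∈ Finset.Nat.antidiagonalTuple (d+1) n) :
    ∑ i, α i = n := Finset.Nat.mem_antidiagonalTuple.mp h

lemma single_le_of_memA {d n : ℕ} {α : Fin (d+1) → ℕ}
    (h : α ∈ Finset.Nat.antidiagonalTuple (d+1) n) (i : Fin (d+1)) : α i ≤ n := by
  rw [← mem_A h]
  exact Finset.single_le_sum (fun j _ => Nat.zero_le _) (Finset.mem_univ i)

/-! ### Combinatorial core -/

lemma sumM {d N : ℕ} {u : Fin (d+1) → ℝ} (hu : ∑ i, u i = 1) :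
    ∑ δ ∈ Finset.Nat.antidiagonalTuple (d+1) N,
      ∏ i, (u i ^ δ i * (((δ i).factorial : ℝ))⁻¹) = ((N.factorial : ℝ))⁻¹ := by
  have h := Finset.sum_pow_eq_sum_piAntidiag (univ : Finset (Fin (d+1))) u N
  rw [hu, one_pow, Finset.piAntidiag_univ_fin_eq_antidiagonalTuple] at h
  have key : ∀ δ ∈ Finset.Nat.antidiagonalTuple (d+1) N,
      ∏ i, (u i ^ δ i * (((δ i).factorial : ℝ))⁻¹)
        = ((N.factorial : ℝ))⁻¹ * ((Nat.multinomial univ δ : ℝ) * ∏ i, u i ^ δ i) := by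
    intro δ hδ
    have hspec := Nat.multinomial_spec univ δ
    rw [mem_A hδ] at hspec
    have hcast : (∏ i, (((δ i).factorial : ℕ) : ℝ)) * (Nat.multinomial univ δ : ℝ)
        = (N.factorial : ℝ) := by exact_mod_cast congrArg (Nat.cast : ℕ → ℝ) hspec
    rw [Finset.prod_mul_distrib]
    rw [show ∏ i, (((δ i).factorial : ℝ))⁻¹ = (∏ i, (((δ i).factorial : ℝ)))⁻¹ by
      rw [Finset.prod_inv_distrib]]
    have hne : (∏ i, (((δ i).factorial : ℝ))) ≠ 0 :=
      Finset.prod_ne_zero_iff.2 fun i _ => fact_cast_ne _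
    field_simp
    rw [mul_comm] at hcast
    rw [← hcast]
    ring
  rw [Finset.sum_congr rfl key, ← Finset.mul_sum, ← h, mul_one]

lemma sumE {d n : ℕ} {u : Fin (d+1) → ℝ} (hu : ∑ i, u i = 1) (κ : Fin (d+1) → ℕ) :
    ∑ α ∈ Finset.Nat.antidiagonalTuple (d+1) n,
      ∏ i, (((α i).choose (κ i) : ℝ) * u i ^ α i * (((α i).factorial : ℝ))⁻¹)
      = (∏ i, (u i ^ κ i * (((κ i).factorial : ℝ))⁻¹)) *
        (if ∑ i, κ i ≤ n then (((n - ∑ i, κ i).factorial : ℝ))⁻¹ else 0) := by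
  by_cases hκ : ∑ i, κ i ≤ n
  · rw [if_pos hκ]
    have hfilter : ∑ α ∈ (Finset.Nat.antidiagonalTuple (d+1) n).filter (fun α => ∀ i, κ i ≤ α i),
        ∏ i, (((α i).choose (κ i) : ℝ) * u i ^ α i * (((α i).factorial : ℝ))⁻¹)
        = ∑ α ∈ Finset.Nat.antidiagonalTuple (d+1) n,
        ∏ i, (((α i).choose (κ i) : ℝ) * u i ^ α i * (((α i).factorial : ℝ))⁻¹) := by
      refine Finset.sum_filter_of_ne fun α _ hne i => ?_
      by_contra hlt
      push_neg at hlt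
      exact hne (Finset.prod_eq_zero (Finset.mem_univ i)
        (by rw [Nat.choose_eq_zero_of_lt hlt]; simp))
    rw [← hfilter]
    rw [Finset.sum_nbij' (i := fun α i => α i - κ i) (j := fun δ i => δ i + κ i)
      (t := Finset.Nat.antidiagonalTuple (d+1) (n - ∑ i, κ i))
      (g := fun δ => ∏ i, ((u i ^ κ i * (((κ i).factorial : ℝ))⁻¹) *
        (u i ^ δ i * (((δ i).factorial : ℝ))⁻¹)))]
    · have hsplit : ∀ δ ∈ Finset.Nat.antidiagonalTuple (d+1) (n - ∑ i, κ i),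
          ∏ i, ((u i ^ κ i * (((κ i).factorial : ℝ))⁻¹) *
            (u i ^ δ i * (((δ i).factorial : ℝ))⁻¹))
          = (∏ i, (u i ^ κ i * (((κ i).factorial : ℝ))⁻¹)) *
            ∏ i, (u i ^ δ i * (((δ i).factorial : ℝ))⁻¹) := by
        intro δ _
        rw [Finset.prod_mul_distrib]
      rw [Finset.sum_congr rfl hsplit, ← Finset.mul_sum, sumM hu]
    · intro α hα
      rw [Finset.mem_filter] at hα
      rw [Finset.Nat.mem_antidiagonalTuple]
      rw [← mem_A hα.1]
      rw [← Finset.sum_tsub_distrib _ (fun i _ => hα.2 i)]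
    · intro δ hδ
      rw [Finset.mem_filter, Finset.Nat.mem_antidiagonalTuple]
      refine ⟨?_, fun i => Nat.le_add_left _ _⟩
      rw [Finset.sum_add_distrib, mem_A hδ]
      omega
    · intro α hα
      funext i
      rw [Finset.mem_filter] at hα
      exact Nat.sub_add_cancel (hα.2 i)
    · intro δ _
      funext i
      simp
    · intro α hα
      rw [Finset.mem_filter] at hα
      refine Finset.prod_congr rfl fun i _ => ?_
      have hk := hα.2 i
      have h1 := choose_fact_inv hk
      have hpow : u i ^ α i = u i ^ κ i * u i ^ (α i - κ i) := by
        rw [← pow_add, Nat.add_sub_cancel' hk]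
      show _ = u i ^ κ i * (((κ i).factorial : ℝ))⁻¹ *
        (u i ^ (α i - κ i) * (((α i - κ i).factorial : ℝ))⁻¹)
      rw [mul_right_comm, h1, hpow]
      ring
  · rw [if_neg hκ, mul_zero]
    refine Finset.sum_eq_zero fun α hα => ?_
    have : ∃ i, α i < κ i := by
      by_contra hc
      push_neg at hc
      exact hκ (by rw [← mem_A hα]; exact Finset.sum_le_sum fun i _ => hc i)
    obtain ⟨i, hi⟩ := this
    exact Finset.prod_eq_zero (Finset.mem_univ i)
      (by rw [Nat.choose_eq_zero_of_lt hi]; simp)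

noncomputable def P {d : ℕ} (u : Fin (d+1) → ℝ) (N : ℕ) (κ : Fin (d+1) → ℕ) : ℝ :=
  (∏ i, (u i ^ κ i * (((κ i).factorial : ℝ))⁻¹)) *
    (if ∑ i, κ i ≤ N then (((N - ∑ i, κ i).factorial : ℝ))⁻¹ else 0)

noncomputable def Wc (d m n : ℕ) (u v : Fin (d+1) → ℝ) : ℝ :=
  ∑ β ∈ Finset.Nat.antidiagonalTuple (d+1) m, ∑ α ∈ Finset.Nat.antidiagonalTuple (d+1) n,
    ∏ i, (((α i + β i).factorial : ℝ) * ((((α i).factorial : ℝ))⁻¹)^2 *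
      ((((β i).factorial : ℝ))⁻¹)^2 * u i ^ α i * v i ^ β i)

lemma Wc_eq_Z {d m n : ℕ} {u v : Fin (d+1) → ℝ} (hu : ∑ i, u i = 1) (hv : ∑ i, v i = 1) :
    Wc d m n u v = ∑ κ ∈ Fintype.piFinset (fun _ : Fin (d+1) => range (n+m+1)),
      P u n κ * P v m κ := by
  have step1 : Wc d m n u v = ∑ β ∈ Finset.Nat.antidiagonalTuple (d+1) m,
      ∑ α ∈ Finset.Nat.antidiagonalTuple (d+1) n,
      ∑ κ ∈ Fintype.piFinset (fun _ : Fin (d+1) => range (n+m+1)),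
        ((∏ i, (((α i).choose (κ i) : ℝ) * u i ^ α i * (((α i).factorial : ℝ))⁻¹)) *
         (∏ i, (((β i).choose (κ i) : ℝ) * v i ^ β i * (((β i).factorial : ℝ))⁻¹))) := by
    unfold Wc
    refine Finset.sum_congr rfl fun β hβ => Finset.sum_congr rfl fun α hα => ?_
    have hterm : ∀ i : Fin (d+1),
        (((α i + β i).factorial : ℝ) * ((((α i).factorial : ℝ))⁻¹)^2 *
          ((((β i).factorial : ℝ))⁻¹)^2 * u i ^ α i * v i ^ β i)
        = ∑ k ∈ range (n+m+1),
            ((((α i).choose k : ℕ) : ℝ) * u i ^ α i * (((α i).factorial : ℝ))⁻¹) *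
            ((((β i).choose k : ℕ) : ℝ) * v i ^ β i * (((β i).factorial : ℝ))⁻¹) := by
      intro i
      have hv1 : ∑ k ∈ range (n+m+1), (α i).choose k * (β i).choose k
          = (α i + β i).choose (α i) :=
        vandermonde' _ _ _ (lt_of_le_of_lt (single_le_of_memA hα i) (by omega))
      have hv3 : (((α i + β i).factorial : ℝ) * (((α i).factorial : ℝ))⁻¹ *
          (((β i).factorial : ℝ))⁻¹)
          = ∑ k ∈ range (n+m+1), (((α i).choose k : ℕ) : ℝ) * (((β i).choose k : ℕ) : ℝ) := by
        rw [add_choose_fact, ← hv1]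
        push_cast
        rfl
      calc ((α i + β i).factorial : ℝ) * ((((α i).factorial : ℝ))⁻¹)^2 *
            ((((β i).factorial : ℝ))⁻¹)^2 * u i ^ α i * v i ^ β i
          = (((α i + β i).factorial : ℝ) * (((α i).factorial : ℝ))⁻¹ *
            (((β i).factorial : ℝ))⁻¹) * ((u i ^ α i * (((α i).factorial : ℝ))⁻¹) *
            (v i ^ β i * (((β i).factorial : ℝ))⁻¹)) := by ring
        _ = (∑ k ∈ range (n+m+1), (((α i).choose k : ℕ) : ℝ) * (((β i).choose k : ℕ) : ℝ)) *
            ((u i ^ α i * (((α i).factorial : ℝ))⁻¹) *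
             (v i ^ β i * (((β i).factorial : ℝ))⁻¹)) := by rw [hv3]
        _ = ∑ k ∈ range (n+m+1),
            ((((α i).choose k : ℕ) : ℝ) * u i ^ α i * (((α i).factorial : ℝ))⁻¹) *
            ((((β i).choose k : ℕ) : ℝ) * v i ^ β i * (((β i).factorial : ℝ))⁻¹) := by
          rw [Finset.sum_mul]
          exact Finset.sum_congr rfl fun k _ => by ring
    rw [Finset.prod_congr rfl fun i _ => hterm i]
    rw [Finset.prod_univ_sum]
    refine Finset.sum_congr rfl fun κ _ => ?_
    rw [Finset.prod_mul_distrib]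
  rw [step1]
  rw [Finset.sum_congr rfl fun β (_ : β ∈ _) =>
    Finset.sum_comm (s := Finset.Nat.antidiagonalTuple (d+1) n)]
  rw [Finset.sum_comm]
  refine Finset.sum_congr rfl fun κ _ => ?_
  rw [Finset.sum_comm]
  have : ∀ α ∈ Finset.Nat.antidiagonalTuple (d+1) n,
      (∑ β ∈ Finset.Nat.antidiagonalTuple (d+1) m,
        ((∏ i, (((α i).choose (κ i) : ℝ) * u i ^ α i * (((α i).factorial : ℝ))⁻¹)) *
         (∏ i, (((β i).choose (κ i) : ℝ) * v i ^ β i * (((β i).factorial : ℝ))⁻¹))))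
      = (∏ i, (((α i).choose (κ i) : ℝ) * u i ^ α i * (((α i).factorial : ℝ))⁻¹)) *
          ∑ β ∈ Finset.Nat.antidiagonalTuple (d+1) m,
            (∏ i, (((β i).choose (κ i) : ℝ) * v i ^ β i * (((β i).factorial : ℝ))⁻¹)) := by
    intro α _
    rw [Finset.mul_sum]
  rw [Finset.sum_congr rfl this]
  rw [← Finset.sum_mul, sumE hu κ, sumE hv κ]
  rfl

lemma Wc_flip {d m n : ℕ} (u v : Fin (d+1) → ℝ) : Wc d m n u v = Wc d n m v u := by
  unfold Wc
  rw [Finset.sum_comm]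
  refine Finset.sum_congr rfl fun α _ => Finset.sum_congr rfl fun β _ => ?_
  refine Finset.prod_congr rfl fun i _ => ?_
  rw [Nat.add_comm (β i) (α i)]
  ring

lemma Wc_swap {d m n : ℕ} {u v : Fin (d+1) → ℝ} (hu : ∑ i, u i = 1) (hv : ∑ i, v i = 1) :
    Wc d m n u v = Wc d m n v u := by
  rw [Wc_eq_Z hu hv, Wc_eq_Z hv hu]
  refine Finset.sum_congr rfl fun κ _ => ?_
  unfold P
  have h1 : ∀ w : Fin (d+1) → ℝ, ∏ i, (w i ^ κ i * (((κ i).factorial : ℝ))⁻¹)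
      = (∏ i, w i ^ κ i) * ∏ i, (((κ i).factorial : ℝ))⁻¹ := fun w => Finset.prod_mul_distrib
  rw [h1 u, h1 v]
  ring

lemma Wc_deg {d m n : ℕ} {u v : Fin (d+1) → ℝ} (hu : ∑ i, u i = 1) (hv : ∑ i, v i = 1) :
    Wc d m n u v = Wc d n m u v := by
  rw [Wc_flip u v, Wc_swap hv hu]

/-! ### The simplex: topology and measure -/

lemma stdSimplexSet_eq (d : ℕ) :
    stdSimplexSet d = {x : Fin d → ℝ | (∀ i, 0 ≤ x i) ∧ ∑ i, x i ≤ 1} := by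
  ext x
  constructor
  · rintro ⟨h1, h2⟩; exact ⟨fun i => (h1 i).1, h2⟩
  · rintro ⟨h1, h2⟩
    refine ⟨fun i => ⟨h1 i, ?_⟩, h2⟩
    have : x i ≤ ∑ j, x j :=
      Finset.single_le_sum (fun j _ => h1 j) (Finset.mem_univ i)
    linarith

lemma isClosed_simplex (d : ℕ) : IsClosed (stdSimplexSet d) := by
  rw [stdSimplexSet_eq]
  have : {x : Fin d → ℝ | (∀ i, 0 ≤ x i) ∧ ∑ i, x i ≤ 1}
      = (⋂ i, {x : Fin d → ℝ | 0 ≤ x i}) ∩ {x : Fin d → ℝ | ∑ i, x i ≤ 1} := by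
    ext x; simp [Set.mem_iInter]
  rw [this]
  refine IsClosed.inter (isClosed_iInter fun i => ?_) ?_
  · exact isClosed_le continuous_const (continuous_apply i)
  · exact isClosed_le (by fun_prop) continuous_const

lemma isCompact_simplex (d : ℕ) : IsCompact (stdSimplexSet d) := by
  refine IsCompact.of_isClosed_subset (isCompact_Icc (a := fun _ : Fin d => (0:ℝ))
    (b := fun _ => 1)) (isClosed_simplex d) ?_
  rintro x ⟨h1, _⟩
  exact ⟨fun i => (h1 i).1, fun i => (h1 i).2⟩

lemma measurableSet_simplex (d : ℕ) : MeasurableSet (stdSimplexSet d) :=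
  (isClosed_simplex d).measurableSet

lemma beta_nat (p q : ℕ) :
    ∫ t in (0:ℝ)..1, t ^ p * (1 - t) ^ q
      = (p.factorial : ℝ) * (q.factorial : ℝ) / ((p + q + 1).factorial : ℝ) := by
  induction q generalizing p with
  | zero =>
    simp only [pow_zero, mul_one, integral_pow, one_pow, Nat.factorial_zero, Nat.cast_one,
      Nat.add_zero]
    rw [zero_pow (Nat.succ_ne_zero p)]
    have e1 : ((p + 1).factorial : ℝ) = (p + 1) * (p.factorial : ℝ) := by
      exact_mod_cast Nat.factorial_succ p
    rw [e1]
    have := fact_cast_ne p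
    have hp1 : ((p:ℝ) + 1) ≠ 0 := by positivity
    field_simp
    norm_num
  | succ q ih =>
    have int1 : IntervalIntegrable (fun t : ℝ => t ^ p * (1-t)^q) volume 0 1 :=
      (by fun_prop : Continuous fun t : ℝ => t ^ p * (1-t)^q).intervalIntegrable 0 1
    have int2 : IntervalIntegrable (fun t : ℝ => t ^ (p+1) * (1-t)^q) volume 0 1 :=
      (by fun_prop : Continuous fun t : ℝ => t ^ (p+1) * (1-t)^q).intervalIntegrable 0 1
    have key : ∫ t in (0:ℝ)..1, t ^ p * (1 - t) ^ (q+1)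
        = (∫ t in (0:ℝ)..1, t ^ p * (1-t)^q) - ∫ t in (0:ℝ)..1, t ^ (p+1) * (1-t)^q := by
      rw [← intervalIntegral.integral_sub int1 int2]
      refine intervalIntegral.integral_congr fun t _ => by ring
    rw [key, ih p, ih (p+1)]
    rw [show p+1+q+1 = p+q+2 from by omega, show p+(q+1)+1 = p+q+2 from by omega]
    have e1 : ((p+q+2).factorial : ℝ) = (p+q+2) * ((p+q+1).factorial : ℝ) := by
      exact_mod_cast Nat.factorial_succ (p+q+1)
    have e2 : ((q+1).factorial : ℝ) = (q+1) * (q.factorial : ℝ) := by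
      exact_mod_cast Nat.factorial_succ q
    have e3 : ((p+1).factorial : ℝ) = (p+1) * (p.factorial : ℝ) := by
      exact_mod_cast Nat.factorial_succ p
    rw [e1, e2, e3]
    have h1 := fact_cast_ne p
    have h2 := fact_cast_ne q
    have h3 := fact_cast_ne (p+q+1)
    have h4 : ((p:ℝ)+(q:ℝ)+2) ≠ 0 := by positivity
    field_simp
    ring

noncomputable def Jint (d : ℕ) (a : Fin d → ℕ) (b : ℕ) : ℝ :=
  ∫ x in stdSimplexSet d, (∏ i, x i ^ a i) * (1 - ∑ i, x i) ^ b

theorem Jint_eq : ∀ (d : ℕ) (a : Fin d → ℕ) (b : ℕ),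
    Jint d a b = (∏ i, ((a i).factorial : ℝ)) * (b.factorial : ℝ)
      / (((∑ i, a i) + b + d).factorial : ℝ) := by
  intro d
  induction d with
  | zero =>
    intro a b
    have hS : stdSimplexSet 0 = Set.univ := by
      ext x
      simp [stdSimplexSet]
    have huniv : (volume : Measure (Fin 0 → ℝ)) Set.univ = 1 := by
      simp [volume_pi, Measure.pi_univ]
    unfold Jint
    rw [hS]
    simp only [Finset.univ_eq_empty, Finset.prod_empty, Finset.sum_empty, one_mul, sub_zero,
      one_pow, Nat.cast_zero]
    rw [setIntegral_const]
    rw [measureReal_def, huniv]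
    simp [div_self (fact_cast_ne b)]
  | succ d ih =>
    intro a b
    classical
    set a' : Fin d → ℕ := fun i => a (Fin.succ i) with ha'
    set E : ℕ := (∑ i, a' i) + b + d with hE
    set J : ℝ := ((∏ i, ((a' i).factorial : ℝ)) * (b.factorial : ℝ)) / ((E).factorial : ℝ)
      with hJ
    have hJval : Jint d a' b = J := by rw [ih a' b, hJ, hE]
    set g : (Fin (d+1) → ℝ) → ℝ := fun x => (∏ i, x i ^ a i) * (1 - ∑ i, x i) ^ b with hg
    have hgcont : Continuous g := by
      apply Continuous.mul
      · exact continuous_finset_prod _ fun i _ => (continuous_apply i).pow _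
      · exact ((continuous_const.sub (by fun_prop)).pow _)
    have hInt : Integrable ((stdSimplexSet (d+1)).indicator g) := by
      rw [integrable_indicator_iff (measurableSet_simplex _)]
      exact (hgcont.continuousOn).integrableOn_compact (isCompact_simplex _)
    have h0 : Jint (d+1) a b = ∫ x, (stdSimplexSet (d+1)).indicator g x := by
      rw [integral_indicator (measurableSet_simplex _)]
      rfl
    have hmp := MeasureTheory.volume_preserving_piFinSuccAbove (fun _ : Fin (d+1) => ℝ) 0
    set e := MeasurableEquiv.piFinSuccAbove (fun _ : Fin (d+1) => ℝ) 0 with he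
    have hesymm : ∀ (p : ℝ × (Fin d → ℝ)), e.symm p = Fin.cons p.1 p.2 := by
      intro p
      ext j
      refine Fin.cases ?_ (fun j => ?_) j
      · simp [he, MeasurableEquiv.piFinSuccAbove, Fin.insertNth_apply_same]
      · simp [he, MeasurableEquiv.piFinSuccAbove]
    have comp : ∫ x, (stdSimplexSet (d+1)).indicator g x
        = ∫ p : ℝ × (Fin d → ℝ), (stdSimplexSet (d+1)).indicator g (Fin.cons p.1 p.2) := by
      rw [← (hmp.symm).integral_comp e.symm.measurableEmbedding]
      refine integral_congr_ae (Filter.Eventually.of_forall fun p => ?_)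
      simp only [hesymm]
    have hProdInt : Integrable
        (fun p : ℝ × (Fin d → ℝ) => (stdSimplexSet (d+1)).indicator g (Fin.cons p.1 p.2))
        volume := by
      have h1 : Integrable (fun p : ℝ × (Fin d → ℝ) =>
          (stdSimplexSet (d+1)).indicator g (e.symm p)) volume :=
        ((hmp.symm).integrable_comp_emb e.symm.measurableEmbedding).2 hInt
      refine h1.congr (Filter.Eventually.of_forall fun p => ?_)
      simp only [hesymm]
    have hfub : ∫ p : ℝ × (Fin d → ℝ), (stdSimplexSet (d+1)).indicator g (Fin.cons p.1 p.2)
        = ∫ t : ℝ, ∫ y : Fin d → ℝ, (stdSimplexSet (d+1)).indicator g (Fin.cons t y) := by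
      rw [MeasureTheory.Measure.volume_eq_prod] at hProdInt ⊢
      exact MeasureTheory.integral_prod _ hProdInt
    have inner_eq : ∀ t : ℝ, t ≠ 1 →
        (∫ y : Fin d → ℝ, (stdSimplexSet (d+1)).indicator g (Fin.cons t y))
          = (Set.Ico (0:ℝ) 1).indicator (fun s => s ^ (a 0) * (1-s)^E) t * J := by
      intro t ht
      set c : ℝ := 1 - t with hc
      set T : Set (Fin d → ℝ) := {y | (∀ i, 0 ≤ y i) ∧ ∑ i, y i ≤ c} with hT
      set h : (Fin d → ℝ) → ℝ := fun y => (∏ i, y i ^ a' i) * (c - ∑ i, y i)^b with hh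
      have hpoint : ∀ y, (stdSimplexSet (d+1)).indicator g (Fin.cons t y)
          = (if 0 ≤ t then t ^ a 0 else 0) * T.indicator h y := by
        intro y
        have hmemiff : Fin.cons t y ∈ stdSimplexSet (d+1) ↔ (0 ≤ t ∧ y ∈ T) := by
          rw [stdSimplexSet_eq]
          simp only [Set.mem_setOf_eq, Fin.forall_fin_succ, Fin.cons_zero, Fin.cons_succ,
            Fin.sum_cons, hT]
          constructor
          · rintro ⟨⟨h1, h2⟩, h3⟩
            exact ⟨h1, h2, by linarith⟩
          · rintro ⟨h1, h2, h3⟩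
            exact ⟨⟨h1, h2⟩, by linarith⟩
        have hgval : g (Fin.cons t y) = t ^ a 0 * h y := by
          rw [hg]
          simp only [Fin.prod_univ_succ, Fin.cons_zero, Fin.cons_succ, Fin.sum_cons]
          rw [hh]
          have : (1 : ℝ) - (t + ∑ i, y i) = c - ∑ i, y i := by rw [hc]; ring
          rw [this]
          ring
        by_cases hmem : Fin.cons t y ∈ stdSimplexSet (d+1)
        · obtain ⟨h1, h2⟩ := hmemiff.mp hmem
          rw [Set.indicator_of_mem hmem, Set.indicator_of_mem h2, if_pos h1, hgval]
        · rw [Set.indicator_of_notMem hmem]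
          by_cases h1 : 0 ≤ t
          · by_cases h2 : y ∈ T
            · exact absurd (hmemiff.mpr ⟨h1, h2⟩) hmem
            · rw [Set.indicator_of_notMem h2, mul_zero]
          · rw [if_neg h1, zero_mul]
      rw [integral_congr_ae (Filter.Eventually.of_forall hpoint), integral_const_mul]
      rcases lt_or_ge t 0 with htneg | htpos
      · rw [if_neg (not_le.mpr htneg), zero_mul,
          Set.indicator_of_notMem (by simp [Set.mem_Ico]; intro h; linarith), zero_mul]
      rcases lt_or_ge t 1 with htlt | htgt
      · have hcpos : 0 < c := by rw [hc]; linarith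
        have hIT : ∫ y, T.indicator h y = c ^ E * J := by
          have hscale := MeasureTheory.Measure.integral_comp_smul_of_nonneg
            (volume : Measure (Fin d → ℝ)) (T.indicator h) c (hR := le_of_lt hcpos)
          rw [Module.finrank_fin_fun] at hscale
          have hptw : ∀ y : Fin d → ℝ, T.indicator h (c • y)
              = c ^ ((∑ i, a' i) + b) *
                (stdSimplexSet d).indicator
                  (fun y => (∏ i, y i ^ a' i) * (1 - ∑ i, y i)^b) y := by
            intro y
            have hmem2 : (c • y ∈ T) ↔ y ∈ stdSimplexSet d := by
              rw [stdSimplexSet_eq, hT]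
              simp only [Set.mem_setOf_eq, Pi.smul_apply, smul_eq_mul]
              constructor
              · rintro ⟨h1, h2⟩
                refine ⟨fun i => nonneg_of_mul_nonneg_right (h1 i) hcpos, ?_⟩
                rw [← Finset.mul_sum] at h2
                nlinarith [h2]
              · rintro ⟨h1, h2⟩
                refine ⟨fun i => mul_nonneg (le_of_lt hcpos) (h1 i), ?_⟩
                rw [← Finset.mul_sum]
                nlinarith [h2]
            by_cases hmem3 : y ∈ stdSimplexSet d
            · rw [Set.indicator_of_mem (hmem2.mpr hmem3), Set.indicator_of_mem hmem3, hh]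
              simp only [Pi.smul_apply, smul_eq_mul]
              rw [← Finset.mul_sum]
              have e1 : ∏ i, (c * y i) ^ a' i = c ^ (∑ i, a' i) * ∏ i, y i ^ a' i := by
                rw [← Finset.prod_pow_eq_pow_sum, ← Finset.prod_mul_distrib]
                exact Finset.prod_congr rfl fun i _ => (mul_pow _ _ _)
              have e2 : (c - c * ∑ i, y i) ^ b = c ^ b * (1 - ∑ i, y i)^b := by
                rw [← mul_pow]
                congr 1
                ring
              rw [e1, e2, pow_add]
              ring
            · rw [Set.indicator_of_notMem (fun hcon => hmem3 (hmem2.mp hcon)),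
                Set.indicator_of_notMem hmem3, mul_zero]
          rw [integral_congr_ae (Filter.Eventually.of_forall hptw), integral_const_mul] at hscale
          rw [integral_indicator (measurableSet_simplex d)] at hscale
          have hJv : (∫ y in stdSimplexSet d, (∏ i, y i ^ a' i) * (1 - ∑ i, y i)^b) = J := hJval
          rw [hJv] at hscale
          have hcd : (c : ℝ) ^ d ≠ 0 := pow_ne_zero _ (ne_of_gt hcpos)
          rw [smul_eq_mul] at hscale
          have hfin : ∫ y, T.indicator h y = c ^ d * (c ^ ((∑ i, a' i) + b) * J) := by
            rw [hscale]
            field_simp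
          rw [hfin, hE, ← mul_assoc, ← pow_add]
          rw [show d + ((∑ i, a' i) + b) = (∑ i, a' i) + b + d from by omega]
        rw [hIT, if_pos htpos, Set.indicator_of_mem (Set.mem_Ico.mpr ⟨htpos, htlt⟩)]
        rw [hc]
        ring
      · have hcneg : c < 0 := by
          rw [hc]
          rcases lt_or_eq_of_le htgt with h | h
          · linarith
          · exact absurd h.symm ht
        have hTempty : T = ∅ := by
          ext y
          simp only [hT, Set.mem_setOf_eq, Set.mem_empty_iff_false, iff_false, not_and]
          intro h1 h2
          have : (0:ℝ) ≤ ∑ i, y i := Finset.sum_nonneg fun i _ => h1 i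
          linarith
        rw [hTempty]
        simp only [Set.indicator_empty, Pi.zero_apply, integral_zero, mul_zero]
        rw [Set.indicator_of_notMem (by simp [Set.mem_Ico]; intro h; linarith), zero_mul]
    have houter : (∫ t : ℝ, ∫ y : Fin d → ℝ, (stdSimplexSet (d+1)).indicator g (Fin.cons t y))
        = (∫ t in (0:ℝ)..1, t ^ (a 0) * (1-t)^E) * J := by
      have hae : (fun t : ℝ => ∫ y : Fin d → ℝ, (stdSimplexSet (d+1)).indicator g (Fin.cons t y))
          =ᵐ[volume] fun t => (Set.Ico (0:ℝ) 1).indicator (fun s => s ^ (a 0) * (1-s)^E) t * J := by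
        have h1 : ∀ᵐ t : ℝ ∂volume, t ≠ 1 := by
          rw [ae_iff]
          simpa using measure_singleton (1:ℝ)
        filter_upwards [h1] with t ht
        exact inner_eq t ht
      rw [integral_congr_ae hae]
      rw [integral_mul_const, integral_indicator measurableSet_Ico]
      congr 1
      rw [intervalIntegral.integral_of_le zero_le_one]
      rw [MeasureTheory.integral_Ico_eq_integral_Ioo, MeasureTheory.integral_Ioc_eq_integral_Ioo]
    rw [h0, comp, hfub, houter, beta_nat]
    have hsum : (∑ i, a i) = a 0 + ∑ i, a' i := by
      rw [Fin.sum_univ_succ]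
    have hprod : (∏ i, ((a i).factorial : ℝ))
        = ((a 0).factorial : ℝ) * ∏ i, ((a' i).factorial : ℝ) := by
      rw [Fin.prod_univ_succ]
    have hidx : a 0 + E + 1 = (∑ i, a i) + b + (d+1) := by
      rw [hE, hsum]; omega
    rw [hJ, hprod, ← hidx]
    have n1 := fact_cast_ne E
    have n2 := fact_cast_ne (a 0 + E + 1)
    field_simp

/-! ### Integrals of Bernstein monomials -/

lemma bary_sum (d : ℕ) (x : Fin d → ℝ) : ∑ i, bary d x i = 1 := by
  unfold bary
  rw [Fin.sum_cons]
  ring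

lemma prod_bary_pow (d : ℕ) (γ : Fin (d+1) → ℕ) (x : Fin d → ℝ) :
    ∏ i, bary d x i ^ γ i = (1 - ∑ i, x i) ^ γ 0 * ∏ i : Fin d, x i ^ γ (Fin.succ i) := by
  unfold bary
  rw [Fin.prod_univ_succ]
  simp [Fin.cons_zero, Fin.cons_succ]

lemma monomial_integral (d : ℕ) (γ : Fin (d+1) → ℕ) :
    ∫ x in stdSimplexSet d, ∏ i, bary d x i ^ γ i
      = (∏ i, ((γ i).factorial : ℝ)) / (((∑ i, γ i) + d).factorial : ℝ) := by
  have heq : ∀ x : Fin d → ℝ, ∏ i, bary d x i ^ γ i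
      = (∏ i : Fin d, x i ^ γ (Fin.succ i)) * (1 - ∑ i, x i) ^ γ 0 := by
    intro x
    rw [prod_bary_pow]
    ring
  have h1 : ∫ x in stdSimplexSet d, ∏ i, bary d x i ^ γ i
      = Jint d (fun i => γ (Fin.succ i)) (γ 0) := by
    unfold Jint
    exact setIntegral_congr_fun (measurableSet_simplex d) fun x _ => heq x
  rw [h1, Jint_eq]
  have hprod : (∏ i, ((γ i).factorial : ℝ))
      = ((γ 0).factorial : ℝ) * ∏ i : Fin d, ((γ (Fin.succ i)).factorial : ℝ) := by
    rw [Fin.prod_univ_succ]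
  have hidx : (∑ i : Fin d, γ (Fin.succ i)) + γ 0 + d = (∑ i, γ i) + d := by
    rw [Fin.sum_univ_succ]; omega
  rw [hprod, hidx]
  ring

lemma prod_fact_ne {d : ℕ} (α : Fin (d+1) → ℕ) : (∏ i, (((α i).factorial : ℝ))) ≠ 0 :=
  Finset.prod_ne_zero_iff.2 fun i _ => fact_cast_ne _

lemma bernsteinIntegral_eq (d : ℕ) (α : Fin (d+1) → ℕ) :
    bernsteinIntegral d α
      = (((∑ i, α i).factorial : ℝ)) / ((((∑ i, α i) + d).factorial : ℝ)) := by
  unfold bernsteinIntegral bernsteinPoly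
  rw [integral_const_mul, monomial_integral]
  have h1 := prod_fact_ne α
  have h2 := fact_cast_ne ((∑ i, α i) + d)
  field_simp

lemma bernstein_mul_integral (d : ℕ) (α β : Fin (d+1) → ℕ) :
    ∫ t in stdSimplexSet d, bernsteinPoly d α t * bernsteinPoly d β t
      = ((((∑ i, α i).factorial : ℝ)) / (∏ i, (((α i).factorial : ℝ)))) *
        ((((∑ i, β i).factorial : ℝ)) / (∏ i, (((β i).factorial : ℝ)))) *
        ((∏ i, (((α i + β i).factorial : ℝ))) /
          ((((∑ i, α i) + (∑ i, β i) + d).factorial : ℝ))) := by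
  have heq : ∀ t : Fin d → ℝ, bernsteinPoly d α t * bernsteinPoly d β t
      = ((((∑ i, α i).factorial : ℝ)) / (∏ i, (((α i).factorial : ℝ)))) *
        ((((∑ i, β i).factorial : ℝ)) / (∏ i, (((β i).factorial : ℝ)))) *
        ∏ i, bary d t i ^ (α i + β i) := by
    intro t
    unfold bernsteinPoly
    have : ∏ i, bary d t i ^ (α i + β i)
        = (∏ i, bary d t i ^ α i) * ∏ i, bary d t i ^ β i := by
      rw [← Finset.prod_mul_distrib]
      exact Finset.prod_congr rfl fun i _ => pow_add _ _ _
    rw [this]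
    ring
  rw [setIntegral_congr_fun (measurableSet_simplex d) fun t _ => heq t]
  rw [integral_const_mul, monomial_integral]
  have hsum : (∑ i, (α i + β i)) = (∑ i, α i) + (∑ i, β i) := by
    rw [Finset.sum_add_distrib]
  rw [hsum]

/-! ### Kernel in `Wc` form -/

noncomputable def Ccoef (d m n : ℕ) : ℝ :=
  (((n+d).factorial : ℝ) * ((m+d).factorial : ℝ) / ((n+m+d).factorial : ℝ)) *
    (n.factorial : ℝ) * (m.factorial : ℝ)

lemma kernel_eq_Wc (d m n : ℕ) (x y : Fin d → ℝ) :
    durrmeyerKernelComp d m n x y = Ccoef d m n * Wc d m n (bary d y) (bary d x) := by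
  unfold durrmeyerKernelComp Wc
  rw [Finset.mul_sum]
  refine Finset.sum_congr rfl fun β hβ => ?_
  rw [Finset.mul_sum]
  refine Finset.sum_congr rfl fun α hα => ?_
  have hsα := mem_A hα
  have hsβ := mem_A hβ
  rw [bernstein_mul_integral, bernsteinIntegral_eq, bernsteinIntegral_eq]
  unfold bernsteinPoly Ccoef
  rw [hsα, hsβ]
  have hsplit : ∏ i, (((α i + β i).factorial : ℝ) * ((((α i).factorial : ℝ))⁻¹)^2 *
      ((((β i).factorial : ℝ))⁻¹)^2 * bary d y i ^ α i * bary d x i ^ β i)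
      = (∏ i, (((α i + β i).factorial : ℝ))) * ((∏ i, (((α i).factorial : ℝ)))⁻¹)^2 *
        ((∏ i, (((β i).factorial : ℝ)))⁻¹)^2 * (∏ i, bary d y i ^ α i) *
        (∏ i, bary d x i ^ β i) := by
    rw [Finset.prod_mul_distrib, Finset.prod_mul_distrib, Finset.prod_mul_distrib,
      Finset.prod_mul_distrib, Finset.prod_pow, Finset.prod_pow, Finset.prod_inv_distrib,
      Finset.prod_inv_distrib]
  rw [hsplit]
  have f1 := fact_cast_ne n
  have f2 := fact_cast_ne m
  have f3 := prod_fact_ne α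
  have f4 := prod_fact_ne β
  have f6 := fact_cast_ne (n+d)
  have f7 := fact_cast_ne (m+d)
  have f8 := fact_cast_ne (n+m+d)
  field_simp

lemma Ccoef_symm (d m n : ℕ) : Ccoef d m n = Ccoef d n m := by
  unfold Ccoef
  rw [show n+m+d = m+n+d from by omega]
  ring

lemma kernel_symm_deg (d m n : ℕ) (x y : Fin d → ℝ) :
    durrmeyerKernelComp d m n x y = durrmeyerKernelComp d n m x y := by
  rw [kernel_eq_Wc, kernel_eq_Wc, Ccoef_symm]
  rw [Wc_deg (bary_sum d y) (bary_sum d x)]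

lemma kernel_symm_arg (d m n : ℕ) (x y : Fin d → ℝ) :
    durrmeyerKernelComp d m n x y = durrmeyerKernelComp d m n y x := by
  rw [kernel_eq_Wc, kernel_eq_Wc]
  rw [Wc_swap (bary_sum d y) (bary_sum d x)]

lemma continuous_bernstein (d : ℕ) (α : Fin (d+1) → ℕ) : Continuous (bernsteinPoly d α) := by
  unfold bernsteinPoly
  apply continuous_const.mul
  apply continuous_finset_prod
  intro i _
  have hb : Continuous fun x : Fin d → ℝ => bary d x i := by
    unfold bary
    induction i using Fin.cases with
    | zero => simp only [Fin.cons_zero]; fun_prop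
    | succ j => simp only [Fin.cons_succ]; exact continuous_apply j
  exact hb.pow _

lemma bary_mem (d : ℕ) {x : Fin d → ℝ} (hx : x ∈ stdSimplexSet d) (i : Fin (d+1)) :
    0 ≤ bary d x i ∧ bary d x i ≤ 1 := by
  obtain ⟨h1, h2⟩ := hx
  have hnn : (0:ℝ) ≤ ∑ j, x j := Finset.sum_nonneg fun j _ => (h1 j).1
  unfold bary
  induction i using Fin.cases with
  | zero => simp only [Fin.cons_zero]; constructor <;> linarith
  | succ j => simp only [Fin.cons_succ]; exact h1 j

lemma bernstein_abs_le (d : ℕ) (α : Fin (d+1) → ℕ) {x : Fin d → ℝ}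
    (hx : x ∈ stdSimplexSet d) :
    ‖bernsteinPoly d α x‖ ≤ ((∑ i, α i).factorial : ℝ) / ∏ i, ((α i).factorial : ℝ) := by
  unfold bernsteinPoly
  rw [Real.norm_eq_abs, abs_mul]
  have hc : (0:ℝ) ≤ ((∑ i, α i).factorial : ℝ) / ∏ i, ((α i).factorial : ℝ) :=
    div_nonneg (by positivity) (Finset.prod_nonneg fun i _ => by positivity)
  rw [abs_of_nonneg hc]
  have hprod0 : (0:ℝ) ≤ ∏ i, bary d x i ^ α i :=
    Finset.prod_nonneg fun i _ => pow_nonneg (bary_mem d hx i).1 _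
  have hprod1 : (∏ i, bary d x i ^ α i) ≤ 1 :=
    Finset.prod_le_one (fun i _ => pow_nonneg (bary_mem d hx i).1 _)
      (fun i _ => pow_le_one₀ (bary_mem d hx i).1 (bary_mem d hx i).2)
  rw [abs_of_nonneg hprod0]
  calc (((∑ i, α i).factorial : ℝ) / ∏ i, ((α i).factorial : ℝ)) * ∏ i, bary d x i ^ α i
      ≤ (((∑ i, α i).factorial : ℝ) / ∏ i, ((α i).factorial : ℝ)) * 1 :=
        mul_le_mul_of_nonneg_left hprod1 hc
    _ = _ := mul_one _

lemma integrableOn_mul_bern {d : ℕ} {f : (Fin d → ℝ) → ℝ}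
    (hf : IntegrableOn f (stdSimplexSet d)) (α : Fin (d+1) → ℕ) :
    IntegrableOn (fun t => f t * bernsteinPoly d α t) (stdSimplexSet d) := by
  have h1 : Integrable (fun t => bernsteinPoly d α t * f t)
      (volume.restrict (stdSimplexSet d)) := by
    refine Integrable.bdd_mul (c := ((∑ i, α i).factorial : ℝ) / ∏ i, ((α i).factorial : ℝ))
      hf ((continuous_bernstein d α).aestronglyMeasurable) ?_
    refine (ae_restrict_mem (measurableSet_simplex d)).mono fun y hy => ?_
    exact bernstein_abs_le d α hy
  exact h1.congr (Filter.Eventually.of_forall fun t => mul_comm _ _)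

lemma integrableOn_bern_mul_bern (d : ℕ) (α β : Fin (d+1) → ℕ) :
    IntegrableOn (fun t => bernsteinPoly d α t * bernsteinPoly d β t) (stdSimplexSet d) :=
  (((continuous_bernstein d α).mul (continuous_bernstein d β)).continuousOn).integrableOn_compact
    (isCompact_simplex d)

lemma op_comp_eq (d m n : ℕ) {f : (Fin d → ℝ) → ℝ} (hf : IntegrableOn f (stdSimplexSet d))
    (x : Fin d → ℝ) :
    durrmeyerOp d m (durrmeyerOp d n f) x
      = ∫ y in stdSimplexSet d, f y * durrmeyerKernelComp d m n x y := by
  have hLHS : durrmeyerOp d m (durrmeyerOp d n f) x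
      = ∑ β ∈ Finset.Nat.antidiagonalTuple (d+1) m,
          ∑ α ∈ Finset.Nat.antidiagonalTuple (d+1) n,
          (((∫ t in stdSimplexSet d, f t * bernsteinPoly d α t) / bernsteinIntegral d α) *
            (∫ t in stdSimplexSet d, bernsteinPoly d α t * bernsteinPoly d β t))
            / bernsteinIntegral d β * bernsteinPoly d β x := by
    unfold durrmeyerOp
    refine Finset.sum_congr rfl fun β _ => ?_
    have hinner : (∫ t in stdSimplexSet d,
          (∑ α ∈ Finset.Nat.antidiagonalTuple (d+1) n,
            ((∫ s in stdSimplexSet d, f s * bernsteinPoly d α s) / bernsteinIntegral d α) *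
              bernsteinPoly d α t) * bernsteinPoly d β t)
        = ∑ α ∈ Finset.Nat.antidiagonalTuple (d+1) n,
            ((∫ s in stdSimplexSet d, f s * bernsteinPoly d α s) / bernsteinIntegral d α) *
              ∫ t in stdSimplexSet d, bernsteinPoly d α t * bernsteinPoly d β t := by
      have h1 : ∀ t : Fin d → ℝ,
          ((∑ α ∈ Finset.Nat.antidiagonalTuple (d+1) n,
            ((∫ s in stdSimplexSet d, f s * bernsteinPoly d α s) / bernsteinIntegral d α) *
              bernsteinPoly d α t) * bernsteinPoly d β t)
          = ∑ α ∈ Finset.Nat.antidiagonalTuple (d+1) n,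
            ((∫ s in stdSimplexSet d, f s * bernsteinPoly d α s) / bernsteinIntegral d α) *
              (bernsteinPoly d α t * bernsteinPoly d β t) := by
        intro t
        rw [Finset.sum_mul]
        exact Finset.sum_congr rfl fun α _ => by ring
      rw [integral_congr_ae (Filter.Eventually.of_forall h1)]
      rw [integral_finset_sum _ (fun α _ => (integrableOn_bern_mul_bern d α β).const_mul _)]
      exact Finset.sum_congr rfl fun α _ => MeasureTheory.integral_const_mul _ _
    rw [hinner, Finset.sum_div, Finset.sum_mul]
  have hRHS : (∫ y in stdSimplexSet d, f y * durrmeyerKernelComp d m n x y)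
      = ∑ β ∈ Finset.Nat.antidiagonalTuple (d+1) m,
          ∑ α ∈ Finset.Nat.antidiagonalTuple (d+1) n,
          (∫ y in stdSimplexSet d, f y * bernsteinPoly d α y) *
            (bernsteinPoly d β x *
              ((∫ t in stdSimplexSet d, bernsteinPoly d α t * bernsteinPoly d β t) /
                (bernsteinIntegral d α * bernsteinIntegral d β))) := by
    have h1 : ∀ y : Fin d → ℝ, f y * durrmeyerKernelComp d m n x y
        = ∑ β ∈ Finset.Nat.antidiagonalTuple (d+1) m,
            ∑ α ∈ Finset.Nat.antidiagonalTuple (d+1) n,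
            (f y * bernsteinPoly d α y) *
              (bernsteinPoly d β x *
                ((∫ t in stdSimplexSet d, bernsteinPoly d α t * bernsteinPoly d β t) /
                  (bernsteinIntegral d α * bernsteinIntegral d β))) := by
      intro y
      unfold durrmeyerKernelComp
      rw [Finset.mul_sum]
      refine Finset.sum_congr rfl fun β _ => ?_
      rw [Finset.mul_sum]
      exact Finset.sum_congr rfl fun α _ => by ring
    rw [integral_congr_ae (Filter.Eventually.of_forall h1)]
    rw [integral_finset_sum _ (fun β _ => integrable_finset_sum _ (fun α _ =>
      (integrableOn_mul_bern hf α).mul_const _))]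
    refine Finset.sum_congr rfl fun β _ => ?_
    rw [integral_finset_sum _ (fun α _ => (integrableOn_mul_bern hf α).mul_const _)]
    exact Finset.sum_congr rfl fun α _ => integral_mul_const _ _
  rw [hLHS, hRHS]
  refine Finset.sum_congr rfl fun β _ => Finset.sum_congr rfl fun α _ => ?_
  simp only [div_eq_mul_inv, mul_inv]
  ring


end DKaux

theorem durrmeyer_kernel_symm_and_comm (d : ℕ) (hd : 0 < d) (m n : ℕ)
    (hm : 0 < m) (hn : 0 < n) :
    (∀ x y : Fin d → ℝ, x ∈ stdSimplexSet d → y ∈ stdSimplexSet d →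
        durrmeyerKernelComp d m n x y = durrmeyerKernelComp d n m x y ∧
        durrmeyerKernelComp d m n x y = durrmeyerKernelComp d m n y x) ∧
      ∀ f : (Fin d → ℝ) → ℝ, IntegrableOn f (stdSimplexSet d) →
        ∀ x ∈ stdSimplexSet d,
          durrmeyerOp d m (durrmeyerOp d n f) x = durrmeyerOp d n (durrmeyerOp d m f) x := by
  constructor
  · intro x y _ _
    exact ⟨DKaux.kernel_symm_deg d m n x y, DKaux.kernel_symm_arg d m n x y⟩
  · intro f hf x _
    rw [DKaux.op_comp_eq d m n hf x, DKaux.op_comp_eq d n m hf x]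
    refine MeasureTheory.integral_congr_ae (Filter.Eventually.of_forall fun y => ?_)
    show f y * durrmeyerKernelComp d m n x y = f y * durrmeyerKernelComp d n m x y
    rw [DKaux.kernel_symm_deg]
end

section
/- Let n ∈ ℕ, β ∈ ℕ_0^{d+1} a multi-index, and y = (y_0,…,y_d) ∈ ℝ^{d+1}. Then the mixed partial derivative of order β of the function t ↦ t^β · (y_0 t_0 + y_1 t_1 + ⋯ + y_d t_d)^n, evaluated at t = (1,1,…,1), equals Σ_{ℓ ≤ β} n^{|ℓ|↓} · (Σ_{ν=0}^{d} y_ν)^{n−|ℓ|} · y^ℓ · Π_{ν=0}^{d} C(β_ν, ℓ_ν) · (β_ν!/ℓ_ν!), where D^β = Π_{ν=0}^{d} (∂/∂t_ν)^{β_ν}, t^β := t_0^{β_0}⋯t_d^{β_d}, y^ℓ := y_0^{ℓ_0}⋯y_d^{ℓ_d}, the sum runs over all ℓ ∈ ℕ_0^{d+1} with ℓ_ν ≤ β_ν for each ν, and n^{k↓} denotes the falling factorial n(n−1)⋯(n−k+1). -/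
/-- The partial derivative `∂/∂t_ν` of a function of `t ∈ ℝ^{d+1}`. -/
noncomputable def partialDeriv (d : ℕ) (ν : Fin (d + 1))
    (g : (Fin (d + 1) → ℝ) → ℝ) : (Fin (d + 1) → ℝ) → ℝ :=
  fun t => fderiv ℝ g t (Pi.single ν 1)

/-- The mixed partial derivative `D^β = ∏_{ν=0}^{d} (∂/∂t_ν)^{β_ν}`. -/
noncomputable def mixedPartialDeriv (d : ℕ) (β : Fin (d + 1) → ℕ)
    (g : (Fin (d + 1) → ℝ) → ℝ) : (Fin (d + 1) → ℝ) → ℝ :=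
  (List.finRange (d + 1)).foldr (fun ν h => (partialDeriv d ν)^[β ν] h) g


noncomputable section
namespace MPDaux

variable {d : ℕ}

def G (y : Fin (d+1) → ℝ) (α : Fin (d+1) → ℕ) (m : ℕ) : (Fin (d + 1) → ℝ) → ℝ :=
  fun t => (∏ i, t i ^ α i) * (∑ i, y i * t i) ^ m

lemma hasFDerivAt_G (y : Fin (d+1) → ℝ) (α : Fin (d+1) → ℕ) (m : ℕ) (t : Fin (d+1) → ℝ) :
    HasFDerivAt (G y α m)
      ((∏ i, t i ^ α i) • (((m : ℝ) * (∑ i, y i * t i) ^ (m-1)) •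
          (∑ i, y i • (ContinuousLinearMap.proj i : (Fin (d+1) → ℝ) →L[ℝ] ℝ)))
        + ((∑ i, y i * t i) ^ m) •
          (∑ i, (∏ j ∈ Finset.univ.erase i, t j ^ α j) •
            (((α i : ℝ) * t i ^ (α i - 1)) •
              (ContinuousLinearMap.proj i : (Fin (d+1) → ℝ) →L[ℝ] ℝ)))) t := by
  have hP : HasFDerivAt (fun t : Fin (d+1) → ℝ => ∏ i, t i ^ α i)
      (∑ i, (∏ j ∈ Finset.univ.erase i, t j ^ α j) •
        (((α i : ℝ) * t i ^ (α i - 1)) •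
          (ContinuousLinearMap.proj i : (Fin (d+1) → ℝ) →L[ℝ] ℝ))) t := by
    apply HasFDerivAt.finset_prod
    intro i _
    exact (hasDerivAt_pow (α i) (t i)).comp_hasFDerivAt t
      ((ContinuousLinearMap.proj i : (Fin (d+1) → ℝ) →L[ℝ] ℝ).hasFDerivAt)
  have hfun : (fun t : Fin (d+1) → ℝ => ∑ i, y i * t i)
      = ⇑(∑ i, y i • (ContinuousLinearMap.proj i : (Fin (d+1) → ℝ) →L[ℝ] ℝ)) := by
    funext t
    simp [ContinuousLinearMap.sum_apply]
  have hL : HasFDerivAt (fun t : Fin (d+1) → ℝ => ∑ i, y i * t i)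
      (∑ i, y i • (ContinuousLinearMap.proj i : (Fin (d+1) → ℝ) →L[ℝ] ℝ)) t := by
    rw [hfun]; exact ContinuousLinearMap.hasFDerivAt _
  have hQ : HasFDerivAt (fun t : Fin (d+1) → ℝ => (∑ i, y i * t i) ^ m)
      (((m : ℝ) * (∑ i, y i * t i) ^ (m-1)) •
        (∑ i, y i • (ContinuousLinearMap.proj i : (Fin (d+1) → ℝ) →L[ℝ] ℝ))) t :=
    (hasDerivAt_pow m _).comp_hasFDerivAt t hL
  exact hP.mul hQ

lemma differentiable_G (y : Fin (d+1) → ℝ) (α : Fin (d+1) → ℕ) (m : ℕ) :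
    Differentiable ℝ (G y α m) := fun t => (hasFDerivAt_G y α m t).differentiableAt

lemma prod_update_pow (t : Fin (d+1) → ℝ) (α : Fin (d+1) → ℕ) (ν : Fin (d+1)) (a : ℕ) :
    ∏ i, t i ^ (Function.update α ν a i)
      = t ν ^ a * ∏ i ∈ Finset.univ.erase ν, t i ^ α i := by
  rw [← Finset.mul_prod_erase _ _ (Finset.mem_univ ν), Function.update_self]
  congr 1
  refine Finset.prod_congr rfl fun i hi => ?_
  rw [Function.update_of_ne (Finset.ne_of_mem_erase hi)]

lemma partialDeriv_G (y : Fin (d+1) → ℝ) (ν : Fin (d+1)) (α : Fin (d+1) → ℕ) (m : ℕ) :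
    partialDeriv d ν (G y α m)
      = fun t => (α ν : ℝ) * G y (Function.update α ν (α ν - 1)) m t
          + (m : ℝ) * y ν * G y α (m-1) t := by
  funext t
  show fderiv ℝ (G y α m) t (Pi.single ν 1) = _
  rw [(hasFDerivAt_G y α m t).fderiv]
  have h1 : ∀ i : Fin (d+1), (Pi.single ν 1 : Fin (d+1) → ℝ) i = if i = ν then (1:ℝ) else 0 := by
    intro i; simp [Pi.single_apply]
  simp only [ContinuousLinearMap.add_apply, ContinuousLinearMap.smul_apply,
    ContinuousLinearMap.sum_apply, ContinuousLinearMap.proj_apply, h1, smul_eq_mul,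
    mul_ite, mul_one, mul_zero, Finset.sum_ite_eq' Finset.univ, Finset.mem_univ, if_true]
  simp only [G]
  rw [prod_update_pow]
  have hsplit : (∏ i, t i ^ α i) = t ν ^ α ν * ∏ i ∈ Finset.univ.erase ν, t i ^ α i :=
    (Finset.mul_prod_erase _ _ (Finset.mem_univ ν)).symm
  rcases Nat.eq_zero_or_pos (α ν) with h0 | hpos
  · simp only [h0, Nat.cast_zero, zero_mul, pow_zero, one_mul, zero_add]
    rw [hsplit]; ring
  · have : t ν ^ (α ν - 1) * t ν = t ν ^ α ν := by
      rw [← pow_succ, Nat.sub_add_cancel hpos]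
    rw [hsplit]
    ring_nf
  done

/-- `∂_ν` of a finite sum of scaled `G`'s. -/
lemma partialDeriv_sum_G {I : Type*} (y : Fin (d+1) → ℝ) (ν : Fin (d+1)) (S : Finset I)
    (c : I → ℝ) (A : I → Fin (d+1) → ℕ) (M : I → ℕ) :
    partialDeriv d ν (fun t => ∑ i ∈ S, c i * G y (A i) (M i) t)
      = fun t => ∑ i ∈ S,
          c i * ((A i ν : ℝ) * G y (Function.update (A i) ν (A i ν - 1)) (M i) t
            + (M i : ℝ) * y ν * G y (A i) (M i - 1) t) := by
  funext t
  show fderiv ℝ _ t (Pi.single ν 1) = _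
  rw [fderiv_fun_sum (fun i _ => ((differentiable_G y (A i) (M i)) t).const_mul (c i))]
  rw [ContinuousLinearMap.sum_apply]
  refine Finset.sum_congr rfl fun i _ => ?_
  rw [fderiv_const_mul ((differentiable_G y (A i) (M i)) t) (c i)]
  rw [ContinuousLinearMap.smul_apply, smul_eq_mul]
  congr 1
  have := congrFun (partialDeriv_G y ν (A i) (M i)) t
  exact this

/-- Pascal-style recombination of sums. -/
lemma pascal_sum (k a b : ℕ) (z : ℝ) (W : ℕ → ℕ → ℝ) :
    (∑ j ∈ Finset.range (k+1), (k.choose j : ℝ) * (a.descFactorial (k-j) : ℝ)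
        * (b.descFactorial j : ℝ) * z^j *
      (((a - (k-j) : ℕ) : ℝ) * W (k-j+1) j + ((b - j : ℕ) : ℝ) * z * W (k-j) (j+1)))
    = ∑ j ∈ Finset.range (k+1+1), ((k+1).choose j : ℝ) * (a.descFactorial (k+1-j) : ℝ)
        * (b.descFactorial j : ℝ) * z^j * W (k+1-j) j := by
  set s1 : ℕ → ℝ := fun j => (k.choose j : ℝ) * (a.descFactorial (k+1-j) : ℝ)
      * (b.descFactorial j : ℝ) * z^j * W (k+1-j) j with hs1
  set s2 : ℕ → ℝ := fun j => (k.choose j : ℝ) * (a.descFactorial (k-j) : ℝ)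
      * (b.descFactorial (j+1) : ℝ) * z^(j+1) * W (k-j) (j+1) with hs2
  have key : ∀ j ∈ Finset.range (k+1),
      (k.choose j : ℝ) * (a.descFactorial (k-j) : ℝ) * (b.descFactorial j : ℝ) * z^j *
        (((a - (k-j) : ℕ) : ℝ) * W (k-j+1) j + ((b - j : ℕ) : ℝ) * z * W (k-j) (j+1))
      = s1 j + s2 j := by
    intro j hj
    have hj' : j ≤ k := Nat.lt_succ_iff.mp (Finset.mem_range.mp hj)
    have e1 : k+1-j = (k-j)+1 := by omega
    rw [hs1, hs2]
    simp only []
    rw [e1, Nat.descFactorial_succ a (k-j), Nat.descFactorial_succ b j]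
    push_cast
    ring
  rw [Finset.sum_congr rfl key, Finset.sum_add_distrib]
  -- RHS: peel off the first term
  set F : ℕ → ℝ := fun j => ((k+1).choose j : ℝ) * (a.descFactorial (k+1-j) : ℝ)
      * (b.descFactorial j : ℝ) * z^j * W (k+1-j) j with hF
  rw [show (∑ j ∈ Finset.range (k+1+1), ((k+1).choose j : ℝ) * (a.descFactorial (k+1-j) : ℝ)
        * (b.descFactorial j : ℝ) * z^j * W (k+1-j) j) = ∑ j ∈ Finset.range (k+1+1), F j from rfl,
    Finset.sum_range_succ' F (k+1)]
  have hF0 : F 0 = s1 0 := by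
    rw [hF, hs1]; simp
  have hFsucc : ∀ j ∈ Finset.range (k+1), F (j+1) = s1 (j+1) + s2 j := by
    intro j hj
    have hj' : j ≤ k := Nat.lt_succ_iff.mp (Finset.mem_range.mp hj)
    rw [hF, hs1, hs2]
    simp only []
    have e2 : k+1-(j+1) = k-j := by omega
    rw [e2, Nat.choose_succ_succ k j]
    push_cast
    ring
  rw [Finset.sum_congr rfl hFsucc, Finset.sum_add_distrib, hF0]
  have hs1sum : ∑ j ∈ Finset.range (k+1), s1 j
      = (∑ j ∈ Finset.range (k+1), s1 (j+1)) + s1 0 := by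
    have h1 := Finset.sum_range_succ' s1 (k+1)
    have h2 := Finset.sum_range_succ s1 (k+1)
    have hlast : s1 (k+1) = 0 := by
      rw [hs1]; simp [Nat.choose_succ_self]
    rw [hlast] at h2
    linarith [h1.symm.trans h2]
  linarith [hs1sum]

lemma iter_partialDeriv_sum_G {I : Type*} (y : Fin (d+1) → ℝ) (ν : Fin (d+1)) (k : ℕ)
    (S : Finset I) (c : I → ℝ) (A : I → Fin (d+1) → ℕ) (M : I → ℕ) :
    (partialDeriv d ν)^[k] (fun t => ∑ i ∈ S, c i * G y (A i) (M i) t)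
      = fun t => ∑ i ∈ S, ∑ j ∈ Finset.range (k+1),
          (c i * ((k.choose j : ℝ) * ((A i ν).descFactorial (k - j) : ℝ)
              * ((M i).descFactorial j : ℝ) * y ν ^ j))
            * G y (Function.update (A i) ν (A i ν - (k - j))) (M i - j) t := by
  induction k with
  | zero =>
    simp [Function.update_eq_self]
  | succ k IH =>
    rw [Function.iterate_succ_apply', IH]
    -- flatten double sum into a sum over product set
    have hflat : (fun t => ∑ i ∈ S, ∑ j ∈ Finset.range (k+1),
          (c i * ((k.choose j : ℝ) * ((A i ν).descFactorial (k - j) : ℝ)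
              * ((M i).descFactorial j : ℝ) * y ν ^ j))
            * G y (Function.update (A i) ν (A i ν - (k - j))) (M i - j) t)
        = fun t => ∑ p ∈ S ×ˢ Finset.range (k+1),
            (c p.1 * ((k.choose p.2 : ℝ) * ((A p.1 ν).descFactorial (k - p.2) : ℝ)
              * ((M p.1).descFactorial p.2 : ℝ) * y ν ^ p.2))
            * G y (Function.update (A p.1) ν (A p.1 ν - (k - p.2))) (M p.1 - p.2) t := by
      funext t; rw [Finset.sum_product]
    rw [hflat, partialDeriv_sum_G y ν (S ×ˢ Finset.range (k+1))
      (fun p => c p.1 * ((k.choose p.2 : ℝ) * ((A p.1 ν).descFactorial (k - p.2) : ℝ)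
              * ((M p.1).descFactorial p.2 : ℝ) * y ν ^ p.2))
      (fun p => Function.update (A p.1) ν (A p.1 ν - (k - p.2)))
      (fun p => M p.1 - p.2)]
    funext t
    rw [Finset.sum_product]
    refine Finset.sum_congr rfl fun i _ => ?_
    -- fixed i : identity of sums over j
    have hW := pascal_sum k (A i ν) (M i) (y ν)
      (fun p q => G y (Function.update (A i) ν (A i ν - p)) (M i - q) t)
    calc
      ∑ j ∈ Finset.range (k+1),
          (c i * ((k.choose j : ℝ) * ((A i ν).descFactorial (k - j) : ℝ)
              * ((M i).descFactorial j : ℝ) * y ν ^ j))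
            * (((Function.update (A i) ν (A i ν - (k - j)) ν : ℕ) : ℝ)
                * G y (Function.update (Function.update (A i) ν (A i ν - (k - j))) ν
                    (Function.update (A i) ν (A i ν - (k - j)) ν - 1)) (M i - j) t
              + ((M i - j : ℕ) : ℝ) * y ν
                * G y (Function.update (A i) ν (A i ν - (k - j))) (M i - j - 1) t)
        = c i * ∑ j ∈ Finset.range (k+1),
            ((k.choose j : ℝ) * ((A i ν).descFactorial (k - j) : ℝ)
              * ((M i).descFactorial j : ℝ) * (y ν)^j) *
            (((A i ν - (k-j) : ℕ) : ℝ)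
                * G y (Function.update (A i) ν (A i ν - (k-j+1))) (M i - j) t
              + ((M i - j : ℕ) : ℝ) * y ν
                * G y (Function.update (A i) ν (A i ν - (k-j))) (M i - (j+1)) t) := by
          rw [Finset.mul_sum]
          refine Finset.sum_congr rfl fun j hj => ?_
          rw [Function.update_self, Function.update_idem]
          have e1 : A i ν - (k - j) - 1 = A i ν - (k-j+1) := by omega
          have e2 : M i - j - 1 = M i - (j+1) := by omega
          rw [e1, e2]
          try ring
      _ = c i * ∑ j ∈ Finset.range (k+1+1),
            (((k+1).choose j : ℝ) * ((A i ν).descFactorial (k+1-j) : ℝ)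
              * ((M i).descFactorial j : ℝ) * (y ν)^j)
            * G y (Function.update (A i) ν (A i ν - (k+1-j))) (M i - j) t := by
          rw [hW]
      _ = ∑ j ∈ Finset.range (k+1+1),
          (c i * (((k+1).choose j : ℝ) * ((A i ν).descFactorial (k+1-j) : ℝ)
              * ((M i).descFactorial j : ℝ) * y ν ^ j))
            * G y (Function.update (A i) ν (A i ν - (k+1-j))) (M i - j) t := by
          rw [Finset.mul_sum]; refine Finset.sum_congr rfl fun j _ => ?_; ring

lemma fold_eq (y : Fin (d+1) → ℝ) (β : Fin (d+1) → ℕ) (n : ℕ) :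
    ∀ (s : List (Fin (d+1))), s.Nodup →
    s.foldr (fun ν h => (partialDeriv d ν)^[β ν] h) (G y β n)
      = fun t => ∑ ℓ ∈ Finset.Iic (fun i => if i ∈ s then β i else 0),
          ((∏ i, ((if i ∈ s then β i else 0).choose (ℓ i)
              * (if i ∈ s then β i else 0).descFactorial
                  ((if i ∈ s then β i else 0) - ℓ i)) : ℕ) : ℝ)
            * ((n.descFactorial (∑ i, ℓ i) : ℕ) : ℝ) * (∏ i, y i ^ ℓ i)
            * G y (fun i => if i ∈ s then ℓ i else β i) (n - ∑ i, ℓ i) t := fun s => by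
  induction s with
  | nil =>
    intro _
    have hIic : Finset.Iic (fun i : Fin (d+1) => if i ∈ ([] : List (Fin (d+1))) then β i else 0)
        = {fun _ => 0} := by
      ext ℓ
      simp only [Finset.mem_Iic, Finset.mem_singleton, List.not_mem_nil, if_false]
      constructor
      · intro h; funext i; exact Nat.le_zero.mp (h i)
      · intro h; rw [h]
    rw [hIic]
    funext t
    rw [Finset.sum_singleton]
    simp only [List.not_mem_nil, if_false, List.foldr_nil]
    norm_num
  | cons ν s' IH =>
    intro hnd
    have hνs' : ν ∉ s' := (List.nodup_cons.mp hnd).1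
    have hnd' : s'.Nodup := (List.nodup_cons.mp hnd).2
    rw [List.foldr_cons, IH hnd']
    rw [iter_partialDeriv_sum_G y ν (β ν)
      (Finset.Iic (fun i => if i ∈ s' then β i else 0))
      (fun ℓ => ((∏ i, ((if i ∈ s' then β i else 0).choose (ℓ i)
              * (if i ∈ s' then β i else 0).descFactorial
                  ((if i ∈ s' then β i else 0) - ℓ i)) : ℕ) : ℝ)
            * ((n.descFactorial (∑ i, ℓ i) : ℕ) : ℝ) * (∏ i, y i ^ ℓ i))
      (fun ℓ i => if i ∈ s' then ℓ i else β i)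
      (fun ℓ => n - ∑ i, ℓ i)]
    funext t
    rw [← Finset.sum_product']
    refine Finset.sum_nbij' (fun p => Function.update p.1 ν p.2)
      (fun ℓ => (Function.update ℓ ν 0, ℓ ν)) ?_ ?_ ?_ ?_ ?_
    · rintro ⟨ℓ, j⟩ hp
      rw [Finset.mem_product, Finset.mem_Iic, Finset.mem_range] at hp
      rw [Finset.mem_Iic]
      intro i
      dsimp only
      by_cases hiν : i = ν
      · subst hiν
        rw [Function.update_self]
        simp only [List.mem_cons, true_or, if_true]
        omega
      · rw [Function.update_of_ne hiν]
        have := hp.1 i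
        by_cases his : i ∈ s' <;> simp [his, hiν] at this ⊢ <;> omega
    · intro ℓ hℓ
      rw [Finset.mem_Iic] at hℓ
      rw [Finset.mem_product, Finset.mem_Iic, Finset.mem_range]
      constructor
      · intro i
        dsimp only
        by_cases hiν : i = ν
        · subst hiν; rw [Function.update_self]; simp [hνs']
        · rw [Function.update_of_ne hiν]
          have := hℓ i
          by_cases his : i ∈ s' <;> simp [his, hiν] at this ⊢ <;> omega
      · have := hℓ ν
        simp only [List.mem_cons, true_or, if_true] at this
        dsimp only
        omega
    · rintro ⟨ℓ, j⟩ hp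
      rw [Finset.mem_product, Finset.mem_Iic] at hp
      have hℓν : ℓ ν = 0 := by
        have := hp.1 ν; simpa [hνs'] using this
      dsimp only
      simp only [Function.update_idem, Function.update_self]
      rw [← hℓν, Function.update_eq_self]
    · intro ℓ hℓ
      dsimp only
      simp only [Function.update_idem, Function.update_self]
      exact Function.update_eq_self ν ℓ
    · rintro ⟨ℓ, j⟩ hp
      rw [Finset.mem_product, Finset.mem_Iic, Finset.mem_range] at hp
      obtain ⟨hℓ, hj⟩ := hp
      have hj' : j ≤ β ν := Nat.lt_succ_iff.mp hj
      have hℓν : ℓ ν = 0 := by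
        have := hℓ ν; simpa [hνs'] using this
      dsimp only
      have hAν : (if ν ∈ s' then ℓ ν else β ν) = β ν := by simp [hνs']
      rw [hAν]
      have hjj : β ν - (β ν - j) = j := by omega
      rw [hjj]
      -- sum identity
      have hsum : ∑ i, Function.update ℓ ν j i = (∑ i, ℓ i) + j := by
        rw [Finset.sum_update_of_mem (Finset.mem_univ ν)]
        have h2 : ∑ i, ℓ i = ℓ ν + ∑ i ∈ Finset.univ.erase ν, ℓ i :=
          (Finset.add_sum_erase _ _ (Finset.mem_univ ν)).symm
        rw [Finset.sdiff_singleton_eq_erase, h2, hℓν]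
        omega
      -- G argument identity
      have hGarg : Function.update (fun i => if i ∈ s' then ℓ i else β i) ν j
          = fun i => if i ∈ ν :: s' then Function.update ℓ ν j i else β i := by
        funext i
        by_cases hiν : i = ν
        · subst hiν
          simp [Function.update_self]
        · rw [Function.update_of_ne hiν, Function.update_of_ne hiν]
          by_cases his : i ∈ s' <;> simp [his, hiν]
      -- M identity
      have hM : n - (∑ i, ℓ i) - j = n - ((∑ i, ℓ i) + j) := by omega
      -- descFactorial identity
      have hdesc : (n.descFactorial (∑ i, ℓ i)) * ((n - ∑ i, ℓ i).descFactorial j)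
          = n.descFactorial ((∑ i, ℓ i) + j) := by
        have := Nat.descFactorial_mul_descFactorial
          (k := ∑ i, ℓ i) (m := (∑ i, ℓ i) + j) (n := n) (Nat.le_add_right _ _)
        simpa [Nat.add_sub_cancel_left, mul_comm] using this
      -- y-power identity
      have hy : ∏ i, y i ^ (Function.update ℓ ν j i) = y ν ^ j * ∏ i, y i ^ ℓ i := by
        rw [← Finset.mul_prod_erase Finset.univ (fun i => y i ^ (Function.update ℓ ν j i))
            (Finset.mem_univ ν), Function.update_self]
        have : ∏ i, y i ^ ℓ i = y ν ^ ℓ ν * ∏ i ∈ Finset.univ.erase ν, y i ^ ℓ i :=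
          (Finset.mul_prod_erase _ _ (Finset.mem_univ ν)).symm
        rw [this, hℓν, pow_zero, one_mul]
        congr 1
        refine Finset.prod_congr rfl fun i hi => ?_
        rw [Function.update_of_ne (Finset.ne_of_mem_erase hi)]
      -- choose/descFactorial product identity
      have hc : (∏ i, ((if i ∈ ν :: s' then β i else 0).choose (Function.update ℓ ν j i)
              * (if i ∈ ν :: s' then β i else 0).descFactorial
                  ((if i ∈ ν :: s' then β i else 0) - Function.update ℓ ν j i)))
          = ((β ν).choose j * (β ν).descFactorial (β ν - j))
            * ∏ i, ((if i ∈ s' then β i else 0).choose (ℓ i)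
              * (if i ∈ s' then β i else 0).descFactorial
                  ((if i ∈ s' then β i else 0) - ℓ i)) := by
        rw [← Finset.mul_prod_erase Finset.univ _ (Finset.mem_univ ν)]
        have hν1 : (if ν ∈ ν :: s' then β ν else 0) = β ν := by simp
        have h2 : ∏ i, ((if i ∈ s' then β i else 0).choose (ℓ i)
              * (if i ∈ s' then β i else 0).descFactorial
                  ((if i ∈ s' then β i else 0) - ℓ i))
            = ((if ν ∈ s' then β ν else 0).choose (ℓ ν)
              * (if ν ∈ s' then β ν else 0).descFactorial
                  ((if ν ∈ s' then β ν else 0) - ℓ ν))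
              * ∏ i ∈ Finset.univ.erase ν, ((if i ∈ s' then β i else 0).choose (ℓ i)
              * (if i ∈ s' then β i else 0).descFactorial
                  ((if i ∈ s' then β i else 0) - ℓ i)) :=
          (Finset.mul_prod_erase _ _ (Finset.mem_univ ν)).symm
        rw [h2]
        have hν2 : ((if ν ∈ s' then β ν else 0).choose (ℓ ν)
              * (if ν ∈ s' then β ν else 0).descFactorial
                  ((if ν ∈ s' then β ν else 0) - ℓ ν)) = 1 := by
          simp [hνs', hℓν]
        rw [hν2, one_mul, hν1, Function.update_self]
        congr 1
        refine Finset.prod_congr rfl fun i hi => ?_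
        have hiν : i ≠ ν := Finset.ne_of_mem_erase hi
        rw [Function.update_of_ne hiν]
        have : (if i ∈ ν :: s' then β i else 0) = (if i ∈ s' then β i else 0) := by
          by_cases his : i ∈ s' <;> simp [his, hiν]
        rw [this]
      rw [hGarg, hsum, hM, hc, ← hdesc, hy]
      push_cast
      ring


end MPDaux
end

theorem mixedPartialDeriv_monomial_mul_pow (d : ℕ) (n : ℕ) (hn : 0 < n)
    (β : Fin (d + 1) → ℕ) (y : Fin (d + 1) → ℝ) :
    mixedPartialDeriv d β
        (fun t => (∏ i, t i ^ β i) * (∑ i, y i * t i) ^ n) (fun _ => 1) =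
      ∑ ℓ ∈ Finset.Iic β,
        (n.descFactorial (∑ i, ℓ i) : ℝ) * (∑ i, y i) ^ (n - ∑ i, ℓ i) *
          (∏ i, y i ^ ℓ i) *
          ∏ i, ((β i).choose (ℓ i) : ℝ) * (((β i).factorial : ℝ) / ((ℓ i).factorial : ℝ)) := by
  have hfold := MPDaux.fold_eq y β n (List.finRange (d+1)) (List.nodup_finRange _)
  have hdef : mixedPartialDeriv d β (fun t => (∏ i, t i ^ β i) * (∑ i, y i * t i) ^ n)
      = (List.finRange (d+1)).foldr (fun ν h => (partialDeriv d ν)^[β ν] h)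
          (MPDaux.G y β n) := rfl
  rw [hdef, hfold]
  have hmem : ∀ i : Fin (d+1), (if i ∈ List.finRange (d+1) then β i else 0) = β i := by
    intro i; simp [List.mem_finRange]
  simp only [hmem, List.mem_finRange, if_true]
  refine Finset.sum_congr rfl fun ℓ hℓ => ?_
  have hℓ' : ∀ i, ℓ i ≤ β i := Finset.mem_Iic.mp hℓ
  have hG1 : MPDaux.G y ℓ (n - ∑ i, ℓ i) (fun _ => 1) = (∑ i, y i) ^ (n - ∑ i, ℓ i) := by
    simp [MPDaux.G]
  rw [hG1]
  have key : ∀ i : Fin (d+1), (((β i).descFactorial (β i - ℓ i)) : ℝ)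
      = ((β i).factorial : ℝ) / ((ℓ i).factorial : ℝ) := by
    intro i
    have h1 := Nat.factorial_mul_descFactorial (n := β i) (k := β i - ℓ i) (Nat.sub_le _ _)
    have h2 : β i - (β i - ℓ i) = ℓ i := by have := hℓ' i; omega
    rw [h2] at h1
    rw [eq_div_iff (by positivity : (((ℓ i).factorial : ℝ)) ≠ 0)]
    exact_mod_cast (mul_comm ((ℓ i).factorial) _ ▸ h1)
  have hprod : ((∏ i, ((β i).choose (ℓ i) * (β i).descFactorial (β i - ℓ i)) : ℕ) : ℝ)
      = ∏ i, ((β i).choose (ℓ i) : ℝ) * (((β i).factorial : ℝ) / ((ℓ i).factorial : ℝ)) := by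
    push_cast
    exact Finset.prod_congr rfl fun i _ => by rw [key i]
  rw [hprod]
  ring
end
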